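/- Let T be an intrinsic operator, X an initial space, v a typical weight, and suppose T : X → H_{v,0} is bounded. Then T : X → H_{v,0} is compact if and only if lim_{|z|→1} v(z)·||T* K_z||_{X*} = 0. -/

import Mathlib

/-!
If `S` is compact, the functionals `v z • K z` are bounded by `1` and, because `S` maps into
`H_{v,0}`, tend to zero pointwise on the range of `S`; on the totally bounded image of the unit
ball such convergence is uniform, which is `v z * ‖K z ∘ S‖ → 0`.

Conversely, a bounded sequence has a subsequence converging locally uniformly on the disk, and
`T` preserves this. As the norm of `Hv` is the weighted supremum norm, `‖S uₖ - S f‖` is then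
controlled on a closed disk `|z| ≤ r` by uniform convergence (using `v ≤ 1`) and on the annulus
`r < |z| < 1` by `v z * ‖K z ∘ S‖ * ‖uₖ - f‖`, which is small once `r` is close to `1`.
-/

open Metric Filter Topology

/-- The open unit disk in the complex plane. -/
def UnitDisk : Set ℂ := Metric.ball (0 : ℂ) 1

/-- The filter of `z` in the plane with `|z| → 1⁻`, used to express boundary limits. -/
noncomputable def bdryFilter : Filter ℂ := Filter.comap (fun z : ℂ => ‖z‖) (nhdsWithin 1 (Set.Iio 1))

theorem hasBasis_bdryFilter :
    bdryFilter.HasBasis (· < 1) fun r => {z : ℂ | r < ‖z‖ ∧ ‖z‖ < 1} :=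
  (nhdsLT_basis (1 : ℝ)).comap _

theorem eventually_mem_unitDisk_bdryFilter : ∀ᶠ z in bdryFilter, z ∈ UnitDisk :=
  hasBasis_bdryFilter.eventually_iff.mpr ⟨0, one_pos, fun _ hz => mem_ball_zero_iff.mpr hz.2⟩

section CompactOperator

variable {𝕜 X E F : Type*} [RCLike 𝕜] [NormedAddCommGroup X] [NormedSpace 𝕜 X]
  [NormedAddCommGroup E] [NormedSpace 𝕜 E] [NormedAddCommGroup F] [NormedSpace 𝕜 F]

theorem IsCompactOperator.tendsto_opNorm_comp {S : X →L[𝕜] E} (hS : IsCompactOperator S)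
    {ι : Type*} {l : Filter ι} {Φ : ι → E →L[𝕜] F} {C : ℝ} (hΦ : ∀ᶠ i in l, ‖Φ i‖ ≤ C)
    (hpt : ∀ x, Tendsto (fun i => Φ i (S x)) l (𝓝 0)) :
    Tendsto (fun i => ‖(Φ i).comp S‖) l (𝓝 0) := by
  refine Metric.tendsto_nhds.mpr fun ε hε => ?_
  set δ := ε / (2 * (|C| + 1)) with hδ_def
  have hδ : 0 < δ := by positivity
  have htb : TotallyBounded (S '' closedBall 0 1) :=
    (hS.isCompact_closure_image_closedBall 1).totallyBounded.subset subset_closure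
  obtain ⟨t, hts, htf, hcover⟩ := finite_approx_of_totallyBounded htb δ hδ
  have hnet : ∀ᶠ i in l, ∀ y ∈ t, ‖Φ i y‖ < δ := by
    refine (eventually_all_finite htf).mpr fun y hy => ?_
    obtain ⟨x, -, rfl⟩ := hts hy
    exact (tendsto_zero_iff_norm_tendsto_zero.mp (hpt x)).eventually_lt_const hδ
  filter_upwards [hΦ, hnet] with i hΦi hneti
  have hbound : ‖(Φ i).comp S‖ ≤ ε / 2 := by
    refine ContinuousLinearMap.opNorm_le_of_unit_norm (by positivity) fun x hx => ?_
    obtain ⟨y, hyt, hxy⟩ := Set.mem_iUnion₂.mp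
      (hcover ⟨x, mem_closedBall_zero_iff.mpr hx.le, rfl⟩)
    have hΦS : ‖Φ i (S x - y)‖ ≤ |C| * δ :=
      calc ‖Φ i (S x - y)‖ ≤ ‖Φ i‖ * ‖S x - y‖ := (Φ i).le_opNorm _
        _ ≤ |C| * δ := mul_le_mul (hΦi.trans (le_abs_self C))
            (mem_ball_iff_norm.mp hxy).le (norm_nonneg _) (abs_nonneg C)
    calc ‖((Φ i).comp S) x‖ = ‖Φ i (S x - y) + Φ i y‖ := by simp
      _ ≤ |C| * δ + δ := (norm_add_le _ _).trans (add_le_add hΦS (hneti y hyt).le)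
      _ = ε / 2 := by rw [hδ_def]; field_simp
  rw [dist_zero_right, norm_norm]
  linarith

theorem isCompactOperator_of_tendsto_subseq {S : X →L[𝕜] E}
    (h : ∀ u : ℕ → X, (∀ n, ‖u n‖ ≤ 1) →
      ∃ x, ‖x‖ ≤ 1 ∧ ∃ σ : ℕ → ℕ, StrictMono σ ∧ Tendsto (fun k => S (u (σ k))) atTop (𝓝 (S x))) :
    IsCompactOperator S := by
  have hseq : IsSeqCompact (S '' closedBall 0 1) := by
    intro y hy
    choose u hu hSu using hy
    obtain ⟨x, hx, σ, hσ, hlim⟩ := h u fun n => mem_closedBall_zero_iff.mp (hu n)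
    refine ⟨S x, ⟨x, mem_closedBall_zero_iff.mpr hx, rfl⟩, σ, hσ, ?_⟩
    simpa only [Function.comp_def, hSu] using hlim
  exact (isCompactOperator_iff_image_closedBall_subset_compact (S : X →ₗ[𝕜] E) one_pos).mpr
    ⟨_, hseq.isCompact, subset_rfl⟩

end CompactOperator

section WeightedSpace

variable {X Hv : Type*} [NormedAddCommGroup X] [NormedSpace ℂ X]
  [NormedAddCommGroup Hv] [NormedSpace ℂ Hv]

theorem norm_le_of_le_on_closedBall_of_weighted_le {v : ℂ → ℝ}
    (hv_le1 : ∀ z ∈ UnitDisk, v z ≤ 1) {j : Hv →ₗ[ℂ] (ℂ → ℂ)}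
    (hj_norm : ∀ (g : Hv) (C : ℝ), 0 ≤ C → (∀ z ∈ UnitDisk, v z * ‖j g z‖ ≤ C) → ‖g‖ ≤ C)
    {g : Hv} {r C : ℝ} (hC : 0 ≤ C) (hin : ∀ z ∈ closedBall (0 : ℂ) r, ‖j g z‖ ≤ C)
    (hout : ∀ z ∈ UnitDisk, r < ‖z‖ → v z * ‖j g z‖ ≤ C) : ‖g‖ ≤ C := by
  refine hj_norm g C hC fun z hz => ?_
  rcases le_or_gt ‖z‖ r with hzr | hzr
  · exact (mul_le_of_le_one_left (norm_nonneg _) (hv_le1 z hz)).trans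
      (hin z (mem_closedBall_zero_iff.mpr hzr))
  · exact hout z hz hzr

theorem tendsto_of_tendstoLocallyUniformlyOn_of_tendsto_weighted_opNorm {v : ℂ → ℝ}
    (hv_nonneg : ∀ z ∈ UnitDisk, 0 ≤ v z) (hv_le1 : ∀ z ∈ UnitDisk, v z ≤ 1)
    {j : Hv →ₗ[ℂ] (ℂ → ℂ)}
    (hj_norm : ∀ (g : Hv) (C : ℝ), 0 ≤ C → (∀ z ∈ UnitDisk, v z * ‖j g z‖ ≤ C) → ‖g‖ ≤ C)
    {K : ℂ → Hv →L[ℂ] ℂ} (hK : ∀ z ∈ UnitDisk, ∀ g : Hv, K z g = j g z) {S : X →L[ℂ] Hv}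
    (hlim : Tendsto (fun z => v z * ‖(K z).comp S‖) bdryFilter (𝓝 0))
    {u : ℕ → X} {x : X} {C : ℝ} (hu : ∀ n, ‖u n - x‖ ≤ C)
    (hloc : TendstoLocallyUniformlyOn (fun n => j (S (u n))) (j (S x)) atTop UnitDisk) :
    Tendsto (fun n => S (u n)) atTop (𝓝 (S x)) := by
  have hC : 0 ≤ C := (norm_nonneg _).trans (hu 0)
  refine Metric.tendsto_atTop.mpr fun ε hε => ?_
  obtain ⟨r, hr1, hr⟩ := hasBasis_bdryFilter.eventually_iff.mp
    (hlim.eventually_lt_const (show 0 < ε / (2 * (C + 1)) by positivity))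
  have hunif : TendstoUniformlyOn (fun n => j (S (u n))) (j (S x)) atTop (closedBall 0 r) :=
    (tendstoLocallyUniformlyOn_iff_forall_isCompact isOpen_ball).mp hloc _
      (closedBall_subset_ball hr1) (isCompact_closedBall 0 r)
  obtain ⟨N, hN⟩ :=
    eventually_atTop.mp (Metric.tendstoUniformlyOn_iff.mp hunif (ε / 2) (half_pos hε))
  refine ⟨N, fun n hn => ?_⟩
  have hsmall : ‖S (u n) - S x‖ ≤ ε / 2 := by
    refine norm_le_of_le_on_closedBall_of_weighted_le hv_le1 hj_norm (half_pos hε).le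
      (r := r) (fun z hz => ?_) (fun z hz hzr => ?_)
    · rw [map_sub, Pi.sub_apply, ← dist_eq_norm, dist_comm]
      exact (hN n hn z hz).le
    · calc v z * ‖j (S (u n) - S x) z‖ = v z * ‖(K z).comp S (u n - x)‖ := by
            rw [ContinuousLinearMap.comp_apply, map_sub S, hK z hz]
        _ ≤ v z * (‖(K z).comp S‖ * C) :=
            mul_le_mul_of_nonneg_left (((K z).comp S).le_opNorm_of_le (hu n)) (hv_nonneg z hz)
        _ = v z * ‖(K z).comp S‖ * C := by ring
        _ ≤ ε / (2 * (C + 1)) * C :=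
            mul_le_mul_of_nonneg_right (hr ⟨hzr, mem_ball_zero_iff.mp hz⟩).le hC
        _ ≤ ε / 2 := by
            rw [div_mul_eq_mul_div, div_le_div_iff₀ (by positivity) two_pos]
            nlinarith
  rw [dist_eq_norm]
  linarith

theorem tendsto_weighted_opNorm_of_isCompactOperator {v : ℂ → ℝ}
    (hv_nonneg : ∀ z ∈ UnitDisk, 0 ≤ v z) {j : Hv →ₗ[ℂ] (ℂ → ℂ)}
    (hj_le : ∀ (g : Hv), ∀ z ∈ UnitDisk, v z * ‖j g z‖ ≤ ‖g‖)
    {K : ℂ → Hv →L[ℂ] ℂ} (hK : ∀ z ∈ UnitDisk, ∀ g : Hv, K z g = j g z) {S : X →L[ℂ] Hv}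
    (hS : IsCompactOperator S)
    (hS0 : ∀ f : X, Tendsto (fun z => v z * ‖j (S f) z‖) bdryFilter (𝓝 0)) :
    Tendsto (fun z => v z * ‖(K z).comp S‖) bdryFilter (𝓝 0) := by
  have hnorm_apply : ∀ z ∈ UnitDisk, ∀ g, ‖((v z : ℂ) • K z) g‖ = v z * ‖j g z‖ := by
    intro z hz g
    rw [smul_apply, norm_smul, Complex.norm_of_nonneg (hv_nonneg z hz),
      hK z hz]
  have hbound : ∀ᶠ z in bdryFilter, ‖(v z : ℂ) • K z‖ ≤ 1 := by
    filter_upwards [eventually_mem_unitDisk_bdryFilter] with z hz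
    refine ContinuousLinearMap.opNorm_le_bound _ zero_le_one fun g => ?_
    rw [hnorm_apply z hz, one_mul]
    exact hj_le g z hz
  have hpt (f : X) : Tendsto (fun z => ((v z : ℂ) • K z) (S f)) bdryFilter (𝓝 0) := by
    refine tendsto_zero_iff_norm_tendsto_zero.mpr ((hS0 f).congr' ?_)
    filter_upwards [eventually_mem_unitDisk_bdryFilter] with z hz
    exact (hnorm_apply z hz _).symm
  refine (hS.tendsto_opNorm_comp hbound hpt).congr' ?_
  filter_upwards [eventually_mem_unitDisk_bdryFilter] with z hz
  rw [ContinuousLinearMap.smul_comp, norm_smul, Complex.norm_of_nonneg (hv_nonneg z hz)]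

end WeightedSpace

theorem stmt_13_general {X Hv : Type*}
    [NormedAddCommGroup X] [NormedSpace ℂ X]
    [NormedAddCommGroup Hv] [NormedSpace ℂ Hv]
    (v : ℂ → ℝ)
    (hv_pos : ∀ z ∈ UnitDisk, 0 < v z)
    (hv_le1 : ∀ z ∈ UnitDisk, v z ≤ 1)
    (ιX : X →ₗ[ℂ] (ℂ → ℂ))
    (hιX_hol : ∀ f : X, DifferentiableOn ℂ (ιX f) UnitDisk)
    (hX_ball : ∀ u : ℕ → X, (∀ n, ‖u n‖ ≤ 1) →
      ∃ (f : X) (σ : ℕ → ℕ), StrictMono σ ∧ ‖f‖ ≤ 1 ∧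
        TendstoLocallyUniformlyOn (fun k => ιX (u (σ k))) (ιX f) atTop UnitDisk)
    (j : Hv →ₗ[ℂ] (ℂ → ℂ))
    (hj_le : ∀ (g : Hv), ∀ z ∈ UnitDisk, v z * ‖j g z‖ ≤ ‖g‖)
    (hj_norm : ∀ (g : Hv) (C : ℝ), 0 ≤ C → (∀ z ∈ UnitDisk, v z * ‖j g z‖ ≤ C) → ‖g‖ ≤ C)
    (K : ℂ → (Hv →L[ℂ] ℂ)) (hK : ∀ z ∈ UnitDisk, ∀ g : Hv, K z g = j g z)
    (T : (ℂ → ℂ) →ₗ[ℂ] (ℂ → ℂ))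
    (hT_intr : ∀ (F : ℕ → (ℂ → ℂ)) (f : ℂ → ℂ),
      (∀ n, DifferentiableOn ℂ (F n) UnitDisk) → DifferentiableOn ℂ f UnitDisk →
      TendstoLocallyUniformlyOn F f atTop UnitDisk →
      TendstoLocallyUniformlyOn (fun n => T (F n)) (T f) atTop UnitDisk)
    (S : X →L[ℂ] Hv) (hS : ∀ f : X, ∀ z ∈ UnitDisk, j (S f) z = T (ιX f) z)
    (hS0 : ∀ f : X, Tendsto (fun z => v z * ‖j (S f) z‖) bdryFilter (nhds 0)) :
    IsCompactOperator S ↔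
      Tendsto (fun z => v z * ‖(K z).comp S‖) bdryFilter (nhds 0) := by
  have hv_nonneg : ∀ z ∈ UnitDisk, 0 ≤ v z := fun z hz => (hv_pos z hz).le
  refine ⟨fun hcpt => tendsto_weighted_opNorm_of_isCompactOperator hv_nonneg hj_le hK hcpt hS0,
    fun hlim => isCompactOperator_of_tendsto_subseq fun u hu => ?_⟩
  obtain ⟨f, σ, hσ, hf, hloc⟩ := hX_ball u hu
  have hlocS : TendstoLocallyUniformlyOn (fun k => j (S (u (σ k)))) (j (S f)) atTop UnitDisk :=
    ((hT_intr _ _ (fun _ => hιX_hol _) (hιX_hol f) hloc).congr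
      fun k _ hz => (hS _ _ hz).symm).congr_right fun _ hz => (hS f _ hz).symm
  have hbdd : ∀ k, ‖u (σ k) - f‖ ≤ 2 := fun k =>
    (norm_sub_le _ _).trans (by linarith [hu (σ k)])
  exact ⟨f, hf, σ, hσ, tendsto_of_tendstoLocallyUniformlyOn_of_tendsto_weighted_opNorm
    hv_nonneg hv_le1 hj_norm hK hlim hbdd hlocS⟩

/-- Let `T` be an intrinsic operator, `X` an initial space, `v` a typical
weight, and suppose `T : X → H_{v,0}` is bounded (realized by `S : X →L[ℂ] Hv` whose range
lies in `H_{v,0}`).  Then `T : X → H_{v,0}` is compact iff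
`lim_{|z| → 1} v z * ‖T* K_z‖_{X*} = 0`. -/
theorem stmt_13 {X Hv : Type*}
    [NormedAddCommGroup X] [NormedSpace ℂ X] [CompleteSpace X]
    [NormedAddCommGroup Hv] [NormedSpace ℂ Hv] [CompleteSpace Hv]
    (v : ℂ → ℝ)
    (hv_cont : ContinuousOn v UnitDisk)
    (hv_pos : ∀ z ∈ UnitDisk, 0 < v z)
    (hv_le1 : ∀ z ∈ UnitDisk, v z ≤ 1)
    (hv_rad : ∀ z ∈ UnitDisk, ∀ w ∈ UnitDisk, ‖z‖ = ‖w‖ → v z = v w)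
    (hv_mono : ∀ z ∈ UnitDisk, ∀ w ∈ UnitDisk, ‖z‖ ≤ ‖w‖ → v w ≤ v z)
    (hv_lim : Tendsto v bdryFilter (nhds 0))
    (ιX : X →ₗ[ℂ] (ℂ → ℂ)) (hιX_inj : Function.Injective ιX)
    (hιX_hol : ∀ f : X, DifferentiableOn ℂ (ιX f) UnitDisk)
    (hX_poly : ∀ q : Polynomial ℂ, ∃ f : X, ∀ z ∈ UnitDisk, ιX f z = q.eval z)
    (hX_ball : ∀ u : ℕ → X, (∀ n, ‖u n‖ ≤ 1) →
      ∃ (f : X) (σ : ℕ → ℕ), StrictMono σ ∧ ‖f‖ ≤ 1 ∧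
        TendstoLocallyUniformlyOn (fun k => ιX (u (σ k))) (ιX f) atTop UnitDisk)
    (j : Hv →ₗ[ℂ] (ℂ → ℂ)) (hj_inj : Function.Injective j)
    (hj_hol : ∀ g : Hv, DifferentiableOn ℂ (j g) UnitDisk)
    (hj_le : ∀ (g : Hv), ∀ z ∈ UnitDisk, v z * ‖j g z‖ ≤ ‖g‖)
    (hj_norm : ∀ (g : Hv) (C : ℝ), 0 ≤ C → (∀ z ∈ UnitDisk, v z * ‖j g z‖ ≤ C) → ‖g‖ ≤ C)
    (hj_surj : ∀ f : ℂ → ℂ, DifferentiableOn ℂ f UnitDisk →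
      (∃ C : ℝ, ∀ z ∈ UnitDisk, v z * ‖f z‖ ≤ C) → ∃ g : Hv, ∀ z ∈ UnitDisk, j g z = f z)
    (K : ℂ → (Hv →L[ℂ] ℂ)) (hK : ∀ z ∈ UnitDisk, ∀ g : Hv, K z g = j g z)
    (T : (ℂ → ℂ) →ₗ[ℂ] (ℂ → ℂ))
    (hT_hol : ∀ f : ℂ → ℂ, DifferentiableOn ℂ f UnitDisk →
      DifferentiableOn ℂ (T f) UnitDisk)
    (hT_intr : ∀ (F : ℕ → (ℂ → ℂ)) (f : ℂ → ℂ),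
      (∀ n, DifferentiableOn ℂ (F n) UnitDisk) → DifferentiableOn ℂ f UnitDisk →
      TendstoLocallyUniformlyOn F f atTop UnitDisk →
      TendstoLocallyUniformlyOn (fun n => T (F n)) (T f) atTop UnitDisk)
    (S : X →L[ℂ] Hv) (hS : ∀ f : X, ∀ z ∈ UnitDisk, j (S f) z = T (ιX f) z)
    (hS0 : ∀ f : X, Tendsto (fun z => v z * ‖j (S f) z‖) bdryFilter (nhds 0)) :
    IsCompactOperator S ↔
      Tendsto (fun z => v z * ‖(K z).comp S‖) bdryFilter (nhds 0) :=
  stmt_13_general v hv_pos hv_le1 ιX hιX_hol hX_ball j hj_le hj_norm K hK T hT_intr S hS hS0
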